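/- arXiv:2201.04315 — 2 statements merged into one kernel-verified Lean document; each statement's English description precedes it below -/
import Mathlib

section
/- Let 𝒫 = (P_θ)_{θ∈Θ} be a class of probability distributions on a measurable space 𝒳, let μ be a prior probability measure on Θ, and let L : Θ × 𝒜 → [0,1] be a measurable loss function into an action space 𝒜. Define the Bayes risk r_B(𝒫,k,L,μ) = inf_δ ∫_Θ E_{X^k∼P_θ^{⊗k}}[∫_𝒜 L(θ,a) δ(da|X^k)] μ(dθ) and the minimax risk r(𝒫,k,L) = inf_δ sup_{θ∈Θ} E_{X^k∼P_θ^{⊗k}}[∫_𝒜 L(θ,a) δ(da|X^k)], where the infima are over Markov kernels δ from 𝒳^k to 𝒜. Then for all integers n ≥ 1 and m ≥ 0, ε*(𝒫,n,m) ≥ r_B(𝒫,n,L,μ) − r_B(𝒫,n+m,L,μ) and ε*(𝒫,n,m) ≥ r(𝒫,n,L) − r(𝒫,n+m,L). -/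
open MeasureTheory ProbabilityTheory

/-- Total variation distance between two measures: `sup_A |P(A) - Q(A)|`. -/
noncomputable def tvDist {X : Type*} [MeasurableSpace X] (μ ν : Measure X) : ℝ :=
  ⨆ A : {s : Set X // MeasurableSet s}, |(μ A).toReal - (ν A).toReal|

/-- Minimax sample amplification error `ε*(𝒫, n, m)` for the family `(P θ)_θ`:
the infimum over Markov kernels `T : 𝒳^n → 𝒳^{n+m}` of the worst-case TV distance
between `P^{⊗(n+m)}` and the law of `T` applied to `n` i.i.d. samples from `P`. -/
noncomputable def ampErr {X Θ : Type*} [MeasurableSpace X] (P : Θ → Measure X)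
    (n m : ℕ) : ℝ :=
  ⨅ T : {T : Kernel (Fin n → X) (Fin (n + m) → X) // IsMarkovKernel T},
    ⨆ θ : Θ, tvDist (Measure.pi fun _ : Fin (n + m) => P θ)
      ((Measure.pi fun _ : Fin n => P θ).bind T.1)

/-- Risk of a randomized decision rule `δ` (a Markov kernel from `k` samples to actions)
at parameter `θ`, for the loss `L`. -/
noncomputable def decisionRisk {X Θ 𝒜 : Type*} [MeasurableSpace X] [MeasurableSpace 𝒜]
    (P : Θ → Measure X) (k : ℕ) (L : Θ → 𝒜 → ℝ)
    (δ : Kernel (Fin k → X) 𝒜) (θ : Θ) : ℝ :=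
  ∫ x, ∫ a, L θ a ∂(δ x) ∂(Measure.pi fun _ : Fin k => P θ)

/-- Bayes risk with `k` samples under prior `μ`. -/
noncomputable def bayesRisk {X Θ 𝒜 : Type*} [MeasurableSpace X] [MeasurableSpace Θ]
    [MeasurableSpace 𝒜] (P : Θ → Measure X) (k : ℕ) (L : Θ → 𝒜 → ℝ)
    (μ : Measure Θ) : ℝ :=
  ⨅ δ : {δ : Kernel (Fin k → X) 𝒜 // IsMarkovKernel δ},
    ∫ θ, decisionRisk P k L δ.1 θ ∂μ

/-- Minimax risk with `k` samples. -/
noncomputable def minimaxRisk {X Θ 𝒜 : Type*} [MeasurableSpace X] [MeasurableSpace 𝒜]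
    (P : Θ → Measure X) (k : ℕ) (L : Θ → 𝒜 → ℝ) : ℝ :=
  ⨅ δ : {δ : Kernel (Fin k → X) 𝒜 // IsMarkovKernel δ},
    ⨆ θ : Θ, decisionRisk P k L δ.1 θ

/-!
For any amplifier `T` and any decision rule `δ` for `n + m` samples, `δ ∘ₖ T` is a rule for `n`
samples, and at each `θ` its risk exceeds that of `δ` by at most the total variation distance
between `P_θ^{⊗(n+m)}` and the law of `T(X^n)`, because the conditional risk
`x ↦ ∫ L(θ, a) δ(da | x)` takes values in `[0, 1]`. Averaging over `μ`, or taking the supremum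
over `θ`, and then the infima over `δ` and `T`, gives both bounds.
-/

section TotalVariation

variable {Y : Type*} [MeasurableSpace Y]

lemma tvDist_nonneg (p q : Measure Y) : 0 ≤ tvDist p q :=
  Real.iSup_nonneg fun _ => abs_nonneg _

lemma abs_sub_le_tvDist (p q : Measure Y) [IsFiniteMeasure p] [IsFiniteMeasure q]
    {A : Set Y} (hA : MeasurableSet A) : |p.real A - q.real A| ≤ tvDist p q := by
  refine le_ciSup (f := fun s : {s : Set Y // MeasurableSet s} => |p.real s - q.real s|)
    ⟨p.real Set.univ + q.real Set.univ, ?_⟩ ⟨A, hA⟩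
  rintro _ ⟨s, rfl⟩
  refine (abs_sub _ _).trans ?_
  simp only [abs_of_nonneg measureReal_nonneg]
  exact add_le_add (measureReal_mono (Set.subset_univ _)) (measureReal_mono (Set.subset_univ _))

lemma tvDist_le_one (p q : Measure Y) [IsProbabilityMeasure p] [IsProbabilityMeasure q] :
    tvDist p q ≤ 1 := by
  have : Nonempty {s : Set Y // MeasurableSet s} := ⟨⟨∅, MeasurableSet.empty⟩⟩
  refine ciSup_le fun s => ?_
  change |p.real s - q.real s| ≤ 1
  rw [abs_sub_le_iff]
  constructor <;> linarith [measureReal_nonneg (μ := p) (s := s.1),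
    measureReal_nonneg (μ := q) (s := s.1), measureReal_le_one (μ := p) (s := s.1),
    measureReal_le_one (μ := q) (s := s.1)]

lemma MeasureTheory.Measure.restrict_le_restrict_of_subset_le {μ ν : Measure Y}
    {s : Set Y} (hs : MeasurableSet s) (h : ∀ t, MeasurableSet t → t ⊆ s → μ t ≤ ν t) :
    μ.restrict s ≤ ν.restrict s :=
  Measure.le_iff.2 fun t ht => by
    rw [Measure.restrict_apply ht, Measure.restrict_apply ht]
    exact h _ (ht.inter hs) Set.inter_subset_right

lemma integral_le_of_forall_le (ρ : Measure Y) [IsProbabilityMeasure ρ] {f : Y → ℝ} {c : ℝ}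
    (hc : 0 ≤ c) (hf : ∀ y, f y ≤ c) : ∫ y, f y ∂ρ ≤ c := by
  by_cases hint : Integrable f ρ
  · simpa using integral_mono hint (integrable_const c) hf
  · rwa [integral_undef hint]

lemma integrable_of_mem_Icc (ρ : Measure Y) [IsFiniteMeasure ρ] {f : Y → ℝ}
    (hf : AEStronglyMeasurable f ρ) (h0 : ∀ y, 0 ≤ f y) (h1 : ∀ y, f y ≤ 1) :
    Integrable f ρ :=
  .of_bound hf 1 (.of_forall fun y => abs_le.2 ⟨by linarith [h0 y], h1 y⟩)

/-- Split along a Hahn decomposition `s` of `q - p`: off `s` the gap is `≤ 0` since `f ≥ 0`,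
and on `s` it is `≤ q s - p s` since `1 - f ≥ 0`. -/
lemma integral_sub_integral_le_tvDist (p q : Measure Y) [IsFiniteMeasure p] [IsFiniteMeasure q]
    {f : Y → ℝ} (hf : Measurable f) (h0 : ∀ y, 0 ≤ f y) (h1 : ∀ y, f y ≤ 1) :
    ∫ y, f y ∂q - ∫ y, f y ∂p ≤ tvDist p q := by
  obtain ⟨s, hs, hpq, hqp⟩ := hahn_decomposition q p
  have hfp := integrable_of_mem_Icc p hf.aestronglyMeasurable h0 h1
  have hfq := integrable_of_mem_Icc q hf.aestronglyMeasurable h0 h1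
  have h_compl : ∫ y in sᶜ, f y ∂q ≤ ∫ y in sᶜ, f y ∂p :=
    integral_mono_measure (Measure.restrict_le_restrict_of_subset_le hs.compl hqp)
      (.of_forall h0) hfp.restrict
  have h_s : ∫ y in s, (1 - f y) ∂p ≤ ∫ y in s, (1 - f y) ∂q :=
    integral_mono_measure (Measure.restrict_le_restrict_of_subset_le hs hpq)
      (.of_forall fun y => sub_nonneg.2 (h1 y)) ((integrable_const 1).sub hfq).restrict
  have h_one_sub (ρ : Measure Y) [IsFiniteMeasure ρ] (hρ : Integrable f ρ) :
      ∫ y in s, (1 - f y) ∂ρ = ρ.real s - ∫ y in s, f y ∂ρ := by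
    rw [integral_sub (integrable_const 1) hρ.restrict, setIntegral_const, smul_eq_mul, mul_one]
  rw [h_one_sub p hfp, h_one_sub q hfq] at h_s
  rw [← integral_add_compl hs hfp, ← integral_add_compl hs hfq]
  have := abs_sub_le_tvDist p q hs
  linarith [neg_abs_le (p.real s - q.real s)]

end TotalVariation

section KernelComposition

variable {Y W A : Type*} [MeasurableSpace Y] [MeasurableSpace W] [MeasurableSpace A]

lemma MeasureTheory.Measure.integral_bind {ν : Measure Y} [SFinite ν] {κ : Kernel Y W}
    [IsSFiniteKernel κ] {f : W → ℝ} (hf : Integrable f (κ ∘ₘ ν)) :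
    ∫ w, f w ∂(κ ∘ₘ ν) = ∫ y, ∫ w, f w ∂κ y ∂ν := by
  rw [Measure.comp_eq_comp_const_apply] at hf ⊢
  rw [Kernel.integral_comp hf, Kernel.const_apply]

lemma integral_integral_comp_eq_integral_integral_bind {ν : Measure Y} [SFinite ν]
    {T : Kernel Y W} [IsSFiniteKernel T] {δ : Kernel W A} [IsSFiniteKernel δ] {f : A → ℝ}
    (hf : Integrable f (δ ∘ₘ (T ∘ₘ ν))) :
    ∫ y, ∫ a, f a ∂(δ ∘ₖ T) y ∂ν = ∫ w, ∫ a, f a ∂δ w ∂(T ∘ₘ ν) := by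
  rw [← Measure.integral_bind hf, Measure.comp_assoc, Measure.integral_bind]
  rwa [← Measure.comp_assoc]

lemma integral_integral_comp_le_add_tvDist (ν : Measure Y) (ν' : Measure W)
    [IsProbabilityMeasure ν] [IsProbabilityMeasure ν'] (T : Kernel Y W) [IsMarkovKernel T]
    (δ : Kernel W A) [IsMarkovKernel δ] {ℓ : A → ℝ} (hℓ : Measurable ℓ)
    (h0 : ∀ a, 0 ≤ ℓ a) (h1 : ∀ a, ℓ a ≤ 1) :
    ∫ y, ∫ a, ℓ a ∂(δ ∘ₖ T) y ∂ν ≤ ∫ w, ∫ a, ℓ a ∂δ w ∂ν' + tvDist ν' (T ∘ₘ ν) := by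
  rw [integral_integral_comp_eq_integral_integral_bind
    (integrable_of_mem_Icc _ hℓ.aestronglyMeasurable h0 h1)]
  have := integral_sub_integral_le_tvDist ν' (T ∘ₘ ν)
    hℓ.stronglyMeasurable.integral_kernel.measurable (fun w => integral_nonneg h0)
    (fun w => integral_le_of_forall_le (δ w) zero_le_one h1)
  linarith

end KernelComposition

lemma measurable_measure_pi {ι Θ : Type*} [Fintype ι] {X : ι → Type*}
    [∀ i, MeasurableSpace (X i)] [MeasurableSpace Θ] {P : ∀ i, Θ → Measure (X i)}
    [∀ i θ, IsProbabilityMeasure (P i θ)] (hP : ∀ i, Measurable (P i)) :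
    Measurable fun θ => Measure.pi fun i => P i θ := by
  refine .measure_of_isPiSystem_of_isProbabilityMeasure generateFrom_pi.symm isPiSystem_pi ?_
  rintro _ ⟨t, ht, rfl⟩
  simp only [Measure.pi_pi]
  exact Finset.measurable_prod _ fun i _ => (Measure.measurable_coe (ht i trivial)).comp (hP i)

section DecisionRisk

variable {X Θ 𝒜 : Type*} [MeasurableSpace X] [MeasurableSpace 𝒜] {P : Θ → Measure X}
  {L : Θ → 𝒜 → ℝ}

/-- `ampErr P n m` is the infimum over Markov `T` of `⨆ θ, amplificationTV P T θ`. -/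
noncomputable def amplificationTV (P : Θ → Measure X) {k n : ℕ}
    (T : Kernel (Fin k → X) (Fin n → X)) (θ : Θ) : ℝ :=
  tvDist (Measure.pi fun _ : Fin n => P θ) ((Measure.pi fun _ : Fin k => P θ).bind T)

lemma amplificationTV_le_one [∀ θ, IsProbabilityMeasure (P θ)] {k n : ℕ}
    (T : Kernel (Fin k → X) (Fin n → X)) [IsMarkovKernel T] (θ : Θ) :
    amplificationTV P T θ ≤ 1 :=
  tvDist_le_one _ _

lemma decisionRisk_nonneg (hL0 : ∀ θ a, 0 ≤ L θ a) (k : ℕ) (δ : Kernel (Fin k → X) 𝒜)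
    (θ : Θ) : 0 ≤ decisionRisk P k L δ θ :=
  integral_nonneg fun _ => integral_nonneg (hL0 θ)

lemma decisionRisk_le_one [∀ θ, IsProbabilityMeasure (P θ)] (hL1 : ∀ θ a, L θ a ≤ 1) (k : ℕ)
    (δ : Kernel (Fin k → X) 𝒜) [IsMarkovKernel δ] (θ : Θ) : decisionRisk P k L δ θ ≤ 1 :=
  integral_le_of_forall_le _ zero_le_one fun _ => integral_le_of_forall_le _ zero_le_one (hL1 θ)

lemma measurable_decisionRisk [MeasurableSpace Θ] [∀ θ, IsProbabilityMeasure (P θ)]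
    (hP : Measurable P) (hL : Measurable (Function.uncurry L)) (k : ℕ)
    (δ : Kernel (Fin k → X) 𝒜) [IsSFiniteKernel δ] :
    Measurable (decisionRisk P k L δ) := by
  let iid : Kernel Θ (Fin k → X) := ⟨_, measurable_measure_pi fun _ : Fin k => hP⟩
  have : IsMarkovKernel iid := ⟨fun _ => by dsimp [iid]; infer_instance⟩
  have h_inner : StronglyMeasurable fun p : Θ × (Fin k → X) => ∫ a, L p.1 a ∂δ p.2 :=
    (hL.comp (measurable_fst.fst.prodMk measurable_snd)).stronglyMeasurable
      |>.integral_kernel_prod_right' (κ := δ.comap Prod.snd measurable_snd)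
  exact (h_inner.integral_kernel_prod_right' (κ := iid)).measurable

lemma decisionRisk_comp_le_add_iSup_amplificationTV [MeasurableSpace Θ]
    [∀ θ, IsProbabilityMeasure (P θ)] (hL : Measurable (Function.uncurry L))
    (hL0 : ∀ θ a, 0 ≤ L θ a) (hL1 : ∀ θ a, L θ a ≤ 1) {k n : ℕ}
    (T : Kernel (Fin k → X) (Fin n → X)) [IsMarkovKernel T] (δ : Kernel (Fin n → X) 𝒜)
    [IsMarkovKernel δ] (θ : Θ) :
    decisionRisk P k L (δ ∘ₖ T) θ ≤ decisionRisk P n L δ θ + ⨆ θ', amplificationTV P T θ' :=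
  (integral_integral_comp_le_add_tvDist (Measure.pi fun _ => P θ) (Measure.pi fun _ => P θ) T δ
    (hL.comp measurable_prodMk_left) (hL0 θ) (hL1 θ)).trans
    (add_le_add le_rfl (le_ciSup ⟨1, Set.forall_mem_range.2 (amplificationTV_le_one T)⟩ θ))

end DecisionRisk

lemma iInf_sub_iInf_le_iInf {ι κ τ : Type*} [Nonempty κ] [Nonempty τ] {f : ι → ℝ} {g : κ → ℝ}
    {S : τ → ℝ} (hf : BddBelow (Set.range f)) (c : κ → τ → ι)
    (h : ∀ k t, f (c k t) ≤ g k + S t) : (⨅ i, f i) - ⨅ k, g k ≤ ⨅ t, S t :=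
  le_ciInf fun t => sub_le_comm.1 <| le_ciInf fun k =>
    sub_le_iff_le_add.2 <| (ciInf_le hf (c k t)).trans (h k t)

section MarkovKernels

variable {α β : Type*} [MeasurableSpace α] [MeasurableSpace β]

instance nonempty_markovKernel [Nonempty β] : Nonempty {κ : Kernel α β // IsMarkovKernel κ} :=
  ⟨⟨Kernel.const α (Measure.dirac (Classical.arbitrary β)), inferInstance⟩⟩

instance isEmpty_markovKernel [Nonempty α] [IsEmpty β] :
    IsEmpty {κ : Kernel α β // IsMarkovKernel κ} :=
  ⟨fun ⟨κ, _⟩ => not_nonempty_iff.2 ‹_›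
    (nonempty_of_isProbabilityMeasure (κ (Classical.arbitrary α)))⟩

end MarkovKernels

lemma ampErr_nonneg {X Θ : Type*} [MeasurableSpace X] (P : Θ → Measure X) (n m : ℕ) :
    0 ≤ ampErr P n m :=
  Real.iInf_nonneg fun _ => Real.iSup_nonneg fun _ => tvDist_nonneg _ _

section Amplification

variable {X Θ 𝒜 : Type*} [MeasurableSpace X] [MeasurableSpace Θ] [MeasurableSpace 𝒜]
  {P : Θ → Measure X} [∀ θ, IsProbabilityMeasure (P θ)] {L : Θ → 𝒜 → ℝ}

theorem bayesRisk_sub_bayesRisk_le_ampErr [Nonempty 𝒜] (hP : Measurable P) (μ : Measure Θ)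
    [IsProbabilityMeasure μ] (hL : Measurable (Function.uncurry L)) (hL0 : ∀ θ a, 0 ≤ L θ a)
    (hL1 : ∀ θ a, L θ a ≤ 1) (n m : ℕ) :
    bayesRisk P n L μ - bayesRisk P (n + m) L μ ≤ ampErr P n m := by
  obtain ⟨θ₀⟩ := nonempty_of_isProbabilityMeasure μ
  have : Nonempty X := nonempty_of_isProbabilityMeasure (P θ₀)
  refine iInf_sub_iInf_le_iInf ⟨0, ?_⟩
    (fun δ T => ⟨δ.1 ∘ₖ T.1, have := δ.2; have := T.2; inferInstance⟩) fun ⟨δ, _⟩ ⟨T, _⟩ => ?_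
  · rintro _ ⟨δ, rfl⟩
    exact integral_nonneg (decisionRisk_nonneg hL0 n δ.1)
  have h_int : Integrable (decisionRisk P (n + m) L δ) μ :=
    integrable_of_mem_Icc μ (measurable_decisionRisk hP hL _ δ).aestronglyMeasurable
      (decisionRisk_nonneg hL0 _ δ) (decisionRisk_le_one hL1 _ δ)
  calc ∫ θ, decisionRisk P n L (δ ∘ₖ T) θ ∂μ
      ≤ ∫ θ, (decisionRisk P (n + m) L δ θ + ⨆ θ', amplificationTV P T θ') ∂μ :=
        integral_mono_of_nonneg (.of_forall (decisionRisk_nonneg hL0 n _))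
          (h_int.add (integrable_const _))
          (.of_forall (decisionRisk_comp_le_add_iSup_amplificationTV hL hL0 hL1 T δ))
    _ = ∫ θ, decisionRisk P (n + m) L δ θ ∂μ + ⨆ θ', amplificationTV P T θ' := by
        simp [integral_add h_int (integrable_const _)]

theorem minimaxRisk_sub_minimaxRisk_le_ampErr [Nonempty 𝒜] [Nonempty Θ]
    (hL : Measurable (Function.uncurry L)) (hL0 : ∀ θ a, 0 ≤ L θ a) (hL1 : ∀ θ a, L θ a ≤ 1)
    (n m : ℕ) : minimaxRisk P n L - minimaxRisk P (n + m) L ≤ ampErr P n m := by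
  have : Nonempty X := nonempty_of_isProbabilityMeasure (P (Classical.arbitrary Θ))
  refine iInf_sub_iInf_le_iInf ⟨0, ?_⟩
    (fun δ T => ⟨δ.1 ∘ₖ T.1, have := δ.2; have := T.2; inferInstance⟩) fun ⟨δ, _⟩ ⟨T, _⟩ => ?_
  · rintro _ ⟨δ, rfl⟩
    exact Real.iSup_nonneg (decisionRisk_nonneg hL0 n δ.1)
  refine ciSup_le fun θ => (decisionRisk_comp_le_add_iSup_amplificationTV hL hL0 hL1 T δ θ).trans ?_
  exact add_le_add (le_ciSup ⟨1, Set.forall_mem_range.2 (decisionRisk_le_one hL1 _ δ)⟩ θ) le_rfl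

end Amplification

theorem sample_amplification_general_lower_bound_general
    {X Θ 𝒜 : Type*} [MeasurableSpace X] [MeasurableSpace Θ] [MeasurableSpace 𝒜]
    (P : Θ → Measure X) (hP : ∀ θ, IsProbabilityMeasure (P θ)) (hPmeas : Measurable P)
    (μ : Measure Θ) (hμ : IsProbabilityMeasure μ)
    (L : Θ → 𝒜 → ℝ) (hL : Measurable (Function.uncurry L))
    (hL0 : ∀ θ a, 0 ≤ L θ a) (hL1 : ∀ θ a, L θ a ≤ 1)
    (n m : ℕ) :
    bayesRisk P n L μ - bayesRisk P (n + m) L μ ≤ ampErr P n m ∧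
    minimaxRisk P n L - minimaxRisk P (n + m) L ≤ ampErr P n m := by
  have : Nonempty Θ := nonempty_of_isProbabilityMeasure μ
  have : Nonempty X := nonempty_of_isProbabilityMeasure (P (Classical.arbitrary Θ))
  rcases isEmpty_or_nonempty 𝒜 with h𝒜 | h𝒜
  · simp only [_root_.bayesRisk, _root_.minimaxRisk, Real.iInf_of_isEmpty, sub_self]
    exact ⟨ampErr_nonneg P n m, ampErr_nonneg P n m⟩
  · exact ⟨bayesRisk_sub_bayesRisk_le_ampErr hPmeas μ hL hL0 hL1 n m,
      minimaxRisk_sub_minimaxRisk_le_ampErr hL hL0 hL1 n m⟩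

/-- Lemma: general lower bound for sample amplification.
For any class of probability distributions `(P θ)_{θ∈Θ}`, any prior `μ`, and any
measurable loss `L : Θ × 𝒜 → [0,1]`, the minimax sample-amplification error dominates
the difference of Bayes risks, and also the difference of minimax risks, between
sample sizes `n` and `n+m`. -/
theorem sample_amplification_general_lower_bound
    {X Θ 𝒜 : Type*} [MeasurableSpace X] [MeasurableSpace Θ] [MeasurableSpace 𝒜]
    (P : Θ → Measure X) (hP : ∀ θ, IsProbabilityMeasure (P θ)) (hPmeas : Measurable P)
    (μ : Measure Θ) (hμ : IsProbabilityMeasure μ)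
    (L : Θ → 𝒜 → ℝ) (hL : Measurable (Function.uncurry L))
    (hL0 : ∀ θ a, 0 ≤ L θ a) (hL1 : ∀ θ a, L θ a ≤ 1)
    (n m : ℕ) (hn : 1 ≤ n) :
    bayesRisk P n L μ - bayesRisk P (n + m) L μ ≤ ampErr P n m ∧
    minimaxRisk P n L - minimaxRisk P (n + m) L ≤ ampErr P n m :=
  sample_amplification_general_lower_bound_general P hP hPmeas μ hμ L hL hL0 hL1 n m
end

section
/- Define h(u) = u − log u − 1 for u > 0. For every d ≥ 1 and all u_1, …, u_d ∈ (0, ∞), letting S = Σ_{j=1}^d (u_j − 1)², one has Σ_{j=1}^d h(u_j) ≥ (1/8) · min( S, √S ). -/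
open scoped BigOperators

lemma key_h (x : ℝ) (hx : 0 < x) : (Real.sqrt x - 1) ^ 2 ≤ x - Real.log x - 1 := by
  have hs : (0:ℝ) < Real.sqrt x := Real.sqrt_pos.mpr hx
  have hlog : Real.log (Real.sqrt x) ≤ Real.sqrt x - 1 := Real.log_le_sub_one_of_pos hs
  have hls : Real.log (Real.sqrt x) = Real.log x / 2 := Real.log_sqrt hx.le
  have hsq : Real.sqrt x ^ 2 = x := Real.sq_sqrt hx.le
  nlinarith [hlog, hls, hsq]

/-- Elementary inequality for `h(u) = u − log u − 1`.
For every `d ≥ 1` and all `u_1, …, u_d > 0`, with `S = Σ_j (u_j − 1)²`,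
`Σ_j h(u_j) ≥ (1/8)·min(S, √S)`. -/
theorem sum_h_ge_min (d : ℕ) (hd : 1 ≤ d) (u : Fin d → ℝ) (hu : ∀ j, 0 < u j) :
    (1 / 8) * min (∑ j, (u j - 1) ^ 2) (Real.sqrt (∑ j, (u j - 1) ^ 2)) ≤
      ∑ j, (u j - Real.log (u j) - 1) := by
  classical
  set S : ℝ := ∑ j, (u j - 1) ^ 2 with hS
  set t : Finset (Fin d) := Finset.univ.filter (fun j => 2 ≤ u j) with ht
  set A : ℝ := ∑ j ∈ tᶜ, (u j - 1) ^ 2 with hA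
  set B : ℝ := ∑ j ∈ t, (u j - 1) ^ 2 with hB
  set L : ℝ := ∑ j ∈ t, (u j - 1) with hL
  set T : ℝ := ∑ j, (Real.sqrt (u j) - 1) ^ 2 with hTdef
  have hA0 : 0 ≤ A := Finset.sum_nonneg fun j _ => sq_nonneg _
  have hB0 : 0 ≤ B := Finset.sum_nonneg fun j _ => sq_nonneg _
  have hL0 : 0 ≤ L := Finset.sum_nonneg fun j hj => by
    have := (Finset.mem_filter.mp hj).2
    show (0:ℝ) ≤ u j - 1
    linarith
  have hSAB : S = A + B := by
    rw [hS, hA, hB, add_comm]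
    exact (Finset.sum_add_sum_compl t _).symm
  have hT : T ≤ ∑ j, (u j - Real.log (u j) - 1) :=
    Finset.sum_le_sum fun j _ => key_h (u j) (hu j)
  have hTsplit : T = (∑ j ∈ t, (Real.sqrt (u j) - 1) ^ 2)
      + ∑ j ∈ tᶜ, (Real.sqrt (u j) - 1) ^ 2 := by
    rw [hTdef]
    exact (Finset.sum_add_sum_compl t _).symm
  have hsmall : A / 6 ≤ ∑ j ∈ tᶜ, (Real.sqrt (u j) - 1) ^ 2 := by
    rw [hA, Finset.sum_div]
    refine Finset.sum_le_sum fun j hj => ?_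
    have hj2 : ¬ (2 ≤ u j) := by
      have := Finset.mem_compl.mp hj
      simpa [ht] using this
    have h2 : u j ≤ 2 := le_of_not_ge hj2
    have hsq : Real.sqrt (u j) ^ 2 = u j := Real.sq_sqrt (hu j).le
    have hsn : 0 ≤ Real.sqrt (u j) := Real.sqrt_nonneg _
    nlinarith [sq_nonneg (Real.sqrt (u j) - 1), sq_nonneg (Real.sqrt (u j) + 1),
      mul_nonneg hsn hsn, sq_nonneg ((Real.sqrt (u j) - 1) * (Real.sqrt (u j) + 1))]
  have hlarge : L / 6 ≤ ∑ j ∈ t, (Real.sqrt (u j) - 1) ^ 2 := by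
    rw [hL, Finset.sum_div]
    refine Finset.sum_le_sum fun j hj => ?_
    have h2 : 2 ≤ u j := (Finset.mem_filter.mp hj).2
    have hsq : Real.sqrt (u j) ^ 2 = u j := Real.sq_sqrt (hu j).le
    have hsn : 0 ≤ Real.sqrt (u j) := Real.sqrt_nonneg _
    nlinarith [sq_nonneg (Real.sqrt (u j) - 7/5), sq_nonneg (Real.sqrt (u j) - 1)]
  have hTge : (A + L) / 6 ≤ T := by rw [hTsplit]; linarith
  by_cases hte : t = ∅
  · have hB0' : B = 0 := by rw [hB, hte, Finset.sum_empty]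
    have hL0' : L = 0 := by rw [hL, hte, Finset.sum_empty]
    have hSA : S = A := by rw [hSAB, hB0', add_zero]
    have hmin : min S (Real.sqrt S) ≤ S := min_le_left _ _
    clear_value S A B L T
    calc (1/8) * min S (Real.sqrt S) ≤ (1/8) * S := by linarith
      _ ≤ (A + L) / 6 := by rw [hSA, hL0']; linarith
      _ ≤ T := hTge
      _ ≤ _ := hT
  · obtain ⟨j0, hj0⟩ := Finset.nonempty_of_ne_empty hte
    have hL1 : 1 ≤ L := by
      have h2 : 2 ≤ u j0 := (Finset.mem_filter.mp hj0).2
      have hh := Finset.single_le_sum (f := fun j => u j - 1)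
        (fun j hj => by
          have := (Finset.mem_filter.mp hj).2
          show (0:ℝ) ≤ u j - 1
          linarith) hj0
      rw [hL]; linarith
    have hBL : Real.sqrt B ≤ L := by
      have h1 : B ≤ L ^ 2 := by
        rw [hB, hL]
        exact Finset.sum_sq_le_sq_sum_of_nonneg fun j hj => by
          have := (Finset.mem_filter.mp hj).2
          show (0:ℝ) ≤ u j - 1
          linarith
      calc Real.sqrt B ≤ Real.sqrt (L ^ 2) := Real.sqrt_le_sqrt h1
        _ = L := Real.sqrt_sq hL0
    clear_value S A B L T
    have hsubadd : Real.sqrt S ≤ Real.sqrt A + Real.sqrt B := by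
      rw [hSAB]
      have h1 : A + B ≤ (Real.sqrt A + Real.sqrt B) ^ 2 := by
        nlinarith [Real.sq_sqrt hA0, Real.sq_sqrt hB0, Real.sqrt_nonneg A, Real.sqrt_nonneg B]
      calc Real.sqrt (A + B) ≤ Real.sqrt ((Real.sqrt A + Real.sqrt B) ^ 2) :=
            Real.sqrt_le_sqrt h1
        _ = Real.sqrt A + Real.sqrt B := Real.sqrt_sq (by positivity)
    have hAq : Real.sqrt A ≤ A + 1/4 := by
      nlinarith [sq_nonneg (Real.sqrt A - 1/2), Real.sq_sqrt hA0]
    have hmin : min S (Real.sqrt S) ≤ Real.sqrt S := min_le_right _ _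
    calc (1/8) * min S (Real.sqrt S) ≤ (1/8) * Real.sqrt S := by linarith
      _ ≤ (A + L) / 6 := by linarith
      _ ≤ T := hTge
      _ ≤ _ := hT
end
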